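/- arXiv:1108.3167 — 3 statements merged into one kernel-verified Lean document; each statement's English description precedes it below -/
import Mathlib

section
/- Among all choices of n_c orthonormal vectors C^1,…,C^{n_c} in R^{n_u}, the functional J(C^1,…,C^{n_c}) = Σ_{j=1}^{n_s} ‖S^j − Σ_{i=1}^{n_c} ⟨C^i, S^j⟩ C^i‖² is minimized by taking the C^i to be orthonormal eigenvectors of S Sᵀ associated with its n_c largest eigenvalues. -/
open Matrix BigOperators Finset

/-- The POD functional: sum over snapshots of the squared Euclidean norm of the
projection residual onto the span of the vectors `C i`. -/
noncomputable def podJ {nu ns nc : ℕ} (S : Matrix (Fin nu) (Fin ns) ℝ)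
    (C : Fin nc → (Fin nu → ℝ)) : ℝ :=
  ∑ j : Fin ns, ∑ x : Fin nu,
    (S x j - ∑ i : Fin nc, (C i ⬝ᵥ (fun y => S y j)) * C i x) ^ 2

lemma pod_resid_eq {n m : ℕ} (D : Fin m → Fin n → ℝ)
    (h : ∀ i j, D i ⬝ᵥ D j = if i = j then (1:ℝ) else 0) (s : Fin n → ℝ) :
    ∑ x, (s x - ∑ i, (D i ⬝ᵥ s) * D i x) ^ 2 = s ⬝ᵥ s - ∑ i, (D i ⬝ᵥ s) ^ 2 := by
  set c : Fin m → ℝ := fun i => D i ⬝ᵥ s with hc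
  have expand : ∀ x, (s x - ∑ i, c i * D i x) ^ 2 =
      s x * s x - 2 * (s x * ∑ i, c i * D i x)
        + (∑ i, c i * D i x) * (∑ i, c i * D i x) := by
    intro x; ring
  rw [Finset.sum_congr rfl fun x _ => expand x]
  rw [Finset.sum_add_distrib, Finset.sum_sub_distrib]
  have h1 : ∑ x, s x * ∑ i, c i * D i x = ∑ i, c i ^ 2 := by
    simp_rw [Finset.mul_sum]
    rw [Finset.sum_comm]
    refine Finset.sum_congr rfl fun i _ => ?_
    have e : ∀ x, s x * (c i * D i x) = c i * (D i x * s x) := fun x => by ring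
    rw [Finset.sum_congr rfl fun x _ => e x, ← Finset.mul_sum]
    rw [show (∑ x, D i x * s x) = D i ⬝ᵥ s from rfl, show D i ⬝ᵥ s = c i from rfl]
    ring
  have h2 : ∑ x, (∑ i, c i * D i x) * (∑ i, c i * D i x) = ∑ i, c i ^ 2 := by
    have e1 : ∀ x, (∑ i, c i * D i x) * (∑ i', c i' * D i' x)
        = ∑ i, ∑ i', c i * c i' * (D i x * D i' x) := by
      intro x
      rw [Finset.sum_mul_sum]
      exact Finset.sum_congr rfl fun i _ => Finset.sum_congr rfl fun i' _ => by ring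
    calc ∑ x, (∑ i, c i * D i x) * (∑ i, c i * D i x)
        = ∑ x, ∑ i, ∑ i', c i * c i' * (D i x * D i' x) :=
          Finset.sum_congr rfl fun x _ => e1 x
      _ = ∑ i, ∑ x, ∑ i', c i * c i' * (D i x * D i' x) := Finset.sum_comm
      _ = ∑ i, ∑ i', ∑ x, c i * c i' * (D i x * D i' x) :=
          Finset.sum_congr rfl fun i _ => Finset.sum_comm
      _ = ∑ i, ∑ i', c i * c i' * (if i = i' then (1:ℝ) else 0) := by
          refine Finset.sum_congr rfl fun i _ => Finset.sum_congr rfl fun i' _ => ?_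
          rw [← h i i', ← Finset.mul_sum]
          rfl
      _ = ∑ i, c i ^ 2 := by
          refine Finset.sum_congr rfl fun i _ => ?_
          simp [Finset.sum_ite_eq]
          ring
  rw [← Finset.mul_sum, h1, h2, show s ⬝ᵥ s = ∑ x, s x * s x from rfl]
  ring

lemma pod_dot_SST {nu ns : ℕ} (S : Matrix (Fin nu) (Fin ns) ℝ) (v : Fin nu → ℝ) :
    v ⬝ᵥ ((S * Sᵀ) *ᵥ v) = ∑ j, (v ⬝ᵥ (fun y => S y j)) ^ 2 := by
  simp only [Matrix.mulVec, Matrix.mul_apply, dotProduct, Matrix.transpose_apply,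
    Finset.sum_mul, Finset.mul_sum]
  show ∑ x, ∑ y, ∑ j, v x * (S x j * S y j * v y) = ∑ j, (∑ y, v y * S y j) ^ 2
  rw [Finset.sum_congr rfl fun (x : Fin nu) _ => Finset.sum_comm, Finset.sum_comm]
  refine Finset.sum_congr rfl fun j _ => ?_
  have : ∀ x : Fin nu, ∑ y, v x * (S x j * S y j * v y)
      = (v x * S x j) * ∑ y, v y * S y j := by
    intro x
    rw [Finset.mul_sum]
    exact Finset.sum_congr rfl fun y _ => by ring
  rw [Finset.sum_congr rfl fun x _ => this x, ← Finset.sum_mul]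
  ring

lemma pod_key {nu nc : ℕ} (hn : nc ≤ nu) (μ t : Fin nu → ℝ) (hmono : Antitone μ)
    (h0 : ∀ k, 0 ≤ t k) (h1 : ∀ k, t k ≤ 1) (hsum : ∑ k, t k = (nc : ℝ)) :
    ∑ k, μ k * t k ≤ ∑ i : Fin nc, μ (Fin.castLE hn i) := by
  rcases Nat.eq_zero_or_pos nu with hz | hpos
  · have hnc : nc = 0 := by omega
    subst hz hnc
    simp
  · set m : ℝ := μ ⟨min nc (nu-1), by omega⟩ with hm
    have hm1 : ∀ k : Fin nu, (k:ℕ) < nc → m ≤ μ k := by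
      intro k hk
      exact hmono (by simp [Fin.le_def]; omega)
    have hm2 : ∀ k : Fin nu, nc ≤ (k:ℕ) → μ k ≤ m := by
      intro k hk
      refine hmono ?_
      have := k.2
      simp [Fin.le_def]
      omega
    set ind : Fin nu → ℝ := fun k => if (k:ℕ) < nc then (1:ℝ) else 0 with hind
    have hfilt : univ.filter (fun k : Fin nu => (k:ℕ) < nc)
        = Finset.map ⟨Fin.castLE hn, Fin.castLE_injective hn⟩ univ := by
      ext k
      simp only [Finset.mem_filter, Finset.mem_univ, true_and, Finset.mem_map,
        Function.Embedding.coeFn_mk]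
      constructor
      · intro h; exact ⟨⟨k, h⟩, Fin.ext rfl⟩
      · rintro ⟨i, rfl⟩; exact i.2
    have hindsum : ∑ k, ind k = (nc : ℝ) := by
      rw [hind]
      rw [Finset.sum_boole]
      rw [hfilt]
      simp
    have hrhs : ∑ i : Fin nc, μ (Fin.castLE hn i) = ∑ k, μ k * ind k := by
      have : ∑ k, μ k * ind k = ∑ k ∈ univ.filter (fun k : Fin nu => (k:ℕ) < nc), μ k := by
        rw [Finset.sum_filter]
        exact Finset.sum_congr rfl fun k _ => by by_cases h : (k:ℕ) < nc <;> simp [hind, h]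
      rw [this, hfilt, Finset.sum_map]
      rfl
    have hterm : ∀ k : Fin nu, μ k * t k - μ k * ind k ≤ m * (t k - ind k) := by
      intro k
      by_cases hk : (k:ℕ) < nc
      · simp only [hind, if_pos hk]
        nlinarith [hm1 k hk, h1 k]
      · simp only [hind, if_neg hk]
        nlinarith [hm2 k (le_of_not_gt hk), h0 k]
    have hsle := Finset.sum_le_sum (fun k (_ : k ∈ univ) => hterm k)
    rw [Finset.sum_sub_distrib, ← Finset.mul_sum, Finset.sum_sub_distrib, hsum, hindsum] at hsle
    rw [hrhs]
    linarith

lemma pod_complete {nu : ℕ} (W : Fin nu → (Fin nu → ℝ))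
    (horthW : ∀ k l : Fin nu, W k ⬝ᵥ W l = if k = l then (1 : ℝ) else 0)
    (v : Fin nu → ℝ) (x : Fin nu) : ∑ k, (W k ⬝ᵥ v) * W k x = v x := by
  set M : Matrix (Fin nu) (Fin nu) ℝ := Matrix.of (fun k x => W k x) with hMdef
  have hM : M * Mᵀ = 1 := by
    ext k l
    simp only [Matrix.mul_apply, Matrix.transpose_apply, Matrix.one_apply, hMdef, Matrix.of_apply]
    exact horthW k l
  have hM2 : Mᵀ * M = 1 := mul_eq_one_comm.mp hM
  have h3 : Mᵀ *ᵥ (M *ᵥ v) = v := by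
    rw [Matrix.mulVec_mulVec, hM2, Matrix.one_mulVec]
  have := congrFun h3 x
  rw [← this]
  simp only [Matrix.mulVec, dotProduct, Matrix.transpose_apply, hMdef, Matrix.of_apply]
  exact Finset.sum_congr rfl fun k _ => by ring

lemma pod_parseval {nu : ℕ} (W : Fin nu → (Fin nu → ℝ))
    (horthW : ∀ k l : Fin nu, W k ⬝ᵥ W l = if k = l then (1 : ℝ) else 0)
    (v : Fin nu → ℝ) : ∑ k, (W k ⬝ᵥ v) ^ 2 = v ⬝ᵥ v := by
  calc ∑ k, (W k ⬝ᵥ v) ^ 2 = ∑ k, (W k ⬝ᵥ v) * ∑ x, W k x * v x :=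
        Finset.sum_congr rfl fun k _ => by rw [show (∑ x, W k x * v x) = W k ⬝ᵥ v from rfl]; ring
    _ = ∑ k, ∑ x, (W k ⬝ᵥ v) * (W k x * v x) :=
        Finset.sum_congr rfl fun k _ => Finset.mul_sum _ _ _
    _ = ∑ x, ∑ k, (W k ⬝ᵥ v) * (W k x * v x) := Finset.sum_comm
    _ = ∑ x, v x * ∑ k, (W k ⬝ᵥ v) * W k x := by
        refine Finset.sum_congr rfl fun x _ => ?_
        rw [Finset.mul_sum]
        exact Finset.sum_congr rfl fun k _ => by ring
    _ = ∑ x, v x * v x := by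
        exact Finset.sum_congr rfl fun x _ => by rw [pod_complete W horthW v x]
    _ = v ⬝ᵥ v := rfl

lemma pod_spectral {nu ns : ℕ} (S : Matrix (Fin nu) (Fin ns) ℝ)
    (W : Fin nu → (Fin nu → ℝ)) (mu : Fin nu → ℝ)
    (horthW : ∀ k l : Fin nu, W k ⬝ᵥ W l = if k = l then (1 : ℝ) else 0)
    (heig : ∀ k : Fin nu, (S * Sᵀ) *ᵥ W k = mu k • W k)
    (v : Fin nu → ℝ) :
    v ⬝ᵥ ((S * Sᵀ) *ᵥ v) = ∑ k, mu k * (W k ⬝ᵥ v) ^ 2 := by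
  have hv : v = ∑ k, (W k ⬝ᵥ v) • W k := by
    funext x
    rw [Finset.sum_apply]
    simp only [Pi.smul_apply, smul_eq_mul]
    exact (pod_complete W horthW v x).symm
  calc v ⬝ᵥ ((S * Sᵀ) *ᵥ v)
      = v ⬝ᵥ ((S * Sᵀ) *ᵥ ∑ k, (W k ⬝ᵥ v) • W k) := by rw [← hv]
    _ = v ⬝ᵥ ∑ k, (W k ⬝ᵥ v) • ((S * Sᵀ) *ᵥ W k) := by
        congr 1
        rw [show ((S * Sᵀ) *ᵥ ∑ k, (W k ⬝ᵥ v) • W k) = (S * Sᵀ).mulVecLin (∑ k, (W k ⬝ᵥ v) • W k) from rfl]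
        rw [map_sum]
        exact Finset.sum_congr rfl fun k _ =>
          (Matrix.mulVecLin_apply _ _).trans (Matrix.mulVec_smul _ _ _)
    _ = ∑ k, (W k ⬝ᵥ v) * (v ⬝ᵥ ((S * Sᵀ) *ᵥ W k)) := by
        simp only [dotProduct, Finset.sum_apply, Pi.smul_apply, smul_eq_mul]
        simp_rw [Finset.mul_sum]
        rw [Finset.sum_comm]
        exact Finset.sum_congr rfl fun k _ => Finset.sum_congr rfl fun x _ => by ring
    _ = ∑ k, (W k ⬝ᵥ v) * (mu k * (v ⬝ᵥ W k)) := by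
        refine Finset.sum_congr rfl fun k _ => ?_
        rw [heig k]
        simp only [dotProduct_smul, smul_eq_mul]
    _ = ∑ k, mu k * (W k ⬝ᵥ v) ^ 2 := by
        refine Finset.sum_congr rfl fun k _ => ?_
        rw [dotProduct_comm v (W k)]
        ring

lemma podJ_eq {nu ns nc : ℕ} (S : Matrix (Fin nu) (Fin ns) ℝ)
    (D : Fin nc → (Fin nu → ℝ))
    (hD : ∀ i j : Fin nc, D i ⬝ᵥ D j = if i = j then (1 : ℝ) else 0) :
    podJ S D = (∑ j, (fun y => S y j) ⬝ᵥ (fun y => S y j))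
      - ∑ i, D i ⬝ᵥ ((S * Sᵀ) *ᵥ D i) := by
  unfold podJ
  have e : ∀ j : Fin ns, ∑ x, (S x j - ∑ i, (D i ⬝ᵥ (fun y => S y j)) * D i x) ^ 2
      = (fun y => S y j) ⬝ᵥ (fun y => S y j) - ∑ i, (D i ⬝ᵥ (fun y => S y j)) ^ 2 :=
    fun j => pod_resid_eq D hD (fun y => S y j)
  rw [Finset.sum_congr rfl fun j _ => e j, Finset.sum_sub_distrib]
  congr 1
  rw [Finset.sum_comm]
  exact Finset.sum_congr rfl fun i _ => (pod_dot_SST S (D i)).symm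

/-- Spectral optimality of the POD: among all orthonormal families of `n_c` vectors,
`J` is minimized by orthonormal eigenvectors of `S Sᵀ` associated with its `n_c`
largest eigenvalues. -/
theorem pod_spectral_optimality {nu ns nc : ℕ} (hn : nc ≤ nu)
    (S : Matrix (Fin nu) (Fin ns) ℝ)
    (W : Fin nu → (Fin nu → ℝ)) (mu : Fin nu → ℝ)
    (horthW : ∀ k l : Fin nu, W k ⬝ᵥ W l = if k = l then (1 : ℝ) else 0)
    (heig : ∀ k : Fin nu, (S * Sᵀ) *ᵥ W k = mu k • W k)
    (hmono : Antitone mu)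
    (C : Fin nc → (Fin nu → ℝ))
    (hC : ∀ i : Fin nc, C i = W (Fin.castLE hn i)) :
    ∀ D : Fin nc → (Fin nu → ℝ),
      (∀ i j : Fin nc, D i ⬝ᵥ D j = if i = j then (1 : ℝ) else 0) →
      podJ S C ≤ podJ S D := by
  intro D hD
  have hCorth : ∀ i j : Fin nc, C i ⬝ᵥ C j = if i = j then (1 : ℝ) else 0 := by
    intro i j
    rw [hC i, hC j, horthW]
    simp [Fin.castLE_inj]
  have eC : podJ S C = (∑ j, (fun y => S y j) ⬝ᵥ (fun y => S y j))
      - ∑ i : Fin nc, mu (Fin.castLE hn i) := by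
    rw [podJ_eq S C hCorth]
    congr 1
    refine Finset.sum_congr rfl fun i _ => ?_
    rw [hC i, heig]
    rw [dotProduct_smul, horthW]
    simp
  have eD : podJ S D = (∑ j, (fun y => S y j) ⬝ᵥ (fun y => S y j))
      - ∑ i, D i ⬝ᵥ ((S * Sᵀ) *ᵥ D i) := podJ_eq S D hD
  set t : Fin nu → ℝ := fun k => ∑ i : Fin nc, (W k ⬝ᵥ D i) ^ 2 with ht
  have e3 : ∑ i, D i ⬝ᵥ ((S * Sᵀ) *ᵥ D i) = ∑ k, mu k * t k := by
    rw [Finset.sum_congr rfl fun i _ => pod_spectral S W mu horthW heig (D i)]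
    rw [Finset.sum_comm]
    refine Finset.sum_congr rfl fun k _ => ?_
    rw [ht, Finset.mul_sum]
  have h0 : ∀ k, 0 ≤ t k := fun k => Finset.sum_nonneg fun i _ => sq_nonneg _
  have h1 : ∀ k, t k ≤ 1 := by
    intro k
    have hres := pod_resid_eq D hD (W k)
    have hnn : 0 ≤ ∑ x, (W k x - ∑ i, (D i ⬝ᵥ W k) * D i x) ^ 2 :=
      Finset.sum_nonneg fun _ _ => sq_nonneg _
    rw [hres, horthW] at hnn
    norm_num at hnn
    have : t k = ∑ i, (D i ⬝ᵥ W k) ^ 2 := by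
      rw [ht]
      exact Finset.sum_congr rfl fun i _ => by rw [dotProduct_comm]
    rw [this]
    linarith
  have hsum : ∑ k, t k = (nc : ℝ) := by
    rw [ht]
    rw [Finset.sum_comm]
    have : ∀ i : Fin nc, ∑ k, (W k ⬝ᵥ D i) ^ 2 = (1 : ℝ) := by
      intro i
      rw [pod_parseval W horthW (D i), hD i i]
      simp
    rw [Finset.sum_congr rfl fun i _ => this i]
    simp
  have hkey := pod_key hn mu t hmono h0 h1 hsum
  rw [eC, eD, e3]
  linarith
end

section
/- Let S_P be SPD, C_f of full column rank, R a given right-hand side, and P = I − C_f (C_fᵀ S_P C_f)⁻¹ C_fᵀ S_P. If δU = δU_C + δU_K with δU_C ∈ Im(C_f), δU_K ∈ Ker(C_fᵀ S_P), and S_P δU = R, then δU_C = C_f (C_fᵀ S_P C_f)⁻¹ C_fᵀ R and (Pᵀ S_P P) δU_K = Pᵀ R. -/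
/-!
Write `M = Cᵀ S C`, invertible because `S` is positive definite and `C` injective.
Applying `Cᵀ` to `S (C a + w) = r` kills `w ∈ ker (Cᵀ S)` and leaves `M a = Cᵀ r`.
The projector `P = 1 - C M⁻¹ Cᵀ S` fixes `ker (Cᵀ S)` and satisfies `Cᵀ S P = 0`;
for symmetric `S` transposing gives `Pᵀ S C = 0`, so applying `Pᵀ` to the system removes
the coarse part and `Pᵀ S P w = Pᵀ S w = Pᵀ r`.
-/

open Matrix

namespace Matrix

variable {m n α : Type*} [Fintype m] [Fintype n] [DecidableEq n] [CommRing α]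
  {C : Matrix m n α} {S : Matrix m m α}

theorem eq_inv_mulVec_of_mulVec_add_eq (hM : IsUnit (Cᵀ * S * C).det) {a : n → α}
    {w r : m → α} (hw : (Cᵀ * S) *ᵥ w = 0) (hsol : S *ᵥ (C *ᵥ a + w) = r) :
    a = (Cᵀ * S * C)⁻¹ *ᵥ (Cᵀ *ᵥ r) := by
  have hcoarse : (Cᵀ * S * C) *ᵥ a = Cᵀ *ᵥ r := by
    rw [← hsol, mulVec_mulVec, mulVec_add, hw, add_zero, mulVec_mulVec]
  rw [← hcoarse, mulVec_mulVec, nonsing_inv_mul _ hM, one_mulVec]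

variable [DecidableEq m]

/-- The `S`-orthogonal projector onto `ker (Cᵀ S)` along the range of `C`. -/
noncomputable def complementProjector (C : Matrix m n α) (S : Matrix m m α) : Matrix m m α :=
  1 - C * (Cᵀ * S * C)⁻¹ * Cᵀ * S

theorem complementProjector_mulVec_of_mulVec_eq_zero {v : m → α} (hv : (Cᵀ * S) *ᵥ v = 0) :
    complementProjector C S *ᵥ v = v := by
  have hcoarse : (C * (Cᵀ * S * C)⁻¹ * Cᵀ * S) *ᵥ v = 0 := by
    rw [Matrix.mul_assoc _ Cᵀ S, ← mulVec_mulVec, hv, mulVec_zero]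
  rw [complementProjector, sub_mulVec, hcoarse, sub_zero, one_mulVec]

theorem transpose_mul_mul_complementProjector (hM : IsUnit (Cᵀ * S * C).det) :
    Cᵀ * S * complementProjector C S = 0 := by
  have hcancel : Cᵀ * S * (C * (Cᵀ * S * C)⁻¹ * Cᵀ * S) = Cᵀ * S := by
    simp only [← Matrix.mul_assoc, mul_nonsing_inv _ hM, Matrix.one_mul]
  rw [complementProjector, Matrix.mul_sub, Matrix.mul_one, hcancel, sub_self]

theorem complementProjector_transpose_mul_mul (hM : IsUnit (Cᵀ * S * C).det) (hS : Sᵀ = S) :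
    (complementProjector C S)ᵀ * S * C = 0 := by
  have h := congrArg transpose (transpose_mul_mul_complementProjector hM)
  rwa [transpose_mul, transpose_mul, transpose_transpose, hS, transpose_zero,
    ← Matrix.mul_assoc] at h

theorem complementProjector_system (hM : IsUnit (Cᵀ * S * C).det) (hS : Sᵀ = S) {a : n → α}
    {w r : m → α} (hw : (Cᵀ * S) *ᵥ w = 0) (hsol : S *ᵥ (C *ᵥ a + w) = r) :
    ((complementProjector C S)ᵀ * S * complementProjector C S) *ᵥ w =
      (complementProjector C S)ᵀ *ᵥ r := by
  set P := complementProjector C S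
  calc (Pᵀ * S * P) *ᵥ w = (Pᵀ * S) *ᵥ w := by
        rw [← mulVec_mulVec, complementProjector_mulVec_of_mulVec_eq_zero hw]
    _ = (Pᵀ * S * C) *ᵥ a + (Pᵀ * S) *ᵥ w := by
        rw [complementProjector_transpose_mul_mul hM hS, zero_mulVec, zero_add]
    _ = Pᵀ *ᵥ r := by
        rw [← hsol, ← mulVec_mulVec, ← mulVec_add, mulVec_mulVec]

end Matrix

/-- Decoupling of the condensed linearized system: if `δU = δU_C + δU_K` with
`δU_C ∈ Im(C_f)`, `δU_K ∈ Ker(C_fᵀ S_P)` and `S_P δU = R`, then `δU_C` is the coarse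
initialization and `δU_K` solves the projected problem. -/
theorem condensed_system_decoupling {nf nc : ℕ}
    (SP : Matrix (Fin nf) (Fin nf) ℝ) (Cf : Matrix (Fin nf) (Fin nc) ℝ)
    (hSP : SP.PosDef)
    (hCf : ∀ x : Fin nc → ℝ, Cf *ᵥ x = 0 → x = 0)
    (R dU dUC dUK : Fin nf → ℝ)
    (hC : ∃ a : Fin nc → ℝ, dUC = Cf *ᵥ a)
    (hK : (Cfᵀ * SP) *ᵥ dUK = 0)
    (hsplit : dU = dUC + dUK)
    (hsol : SP *ᵥ dU = R) :
    dUC = Cf *ᵥ ((Cfᵀ * SP * Cf)⁻¹ *ᵥ (Cfᵀ *ᵥ R)) ∧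
      ((1 - Cf * (Cfᵀ * SP * Cf)⁻¹ * Cfᵀ * SP)ᵀ * SP *
          (1 - Cf * (Cfᵀ * SP * Cf)⁻¹ * Cfᵀ * SP)) *ᵥ dUK
        = (1 - Cf * (Cfᵀ * SP * Cf)⁻¹ * Cfᵀ * SP)ᵀ *ᵥ R := by
  obtain ⟨a, rfl⟩ := hC
  subst hsplit
  have hCf_inj : Function.Injective Cf.mulVec := fun x y hxy =>
    sub_eq_zero.mp (hCf _ (by rw [mulVec_sub, hxy, sub_self]))
  have hM : IsUnit (Cfᵀ * SP * Cf).det :=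
    (isUnit_iff_isUnit_det _).mp (hSP.conjTranspose_mul_mul_same hCf_inj).isUnit
  have hS : SPᵀ = SP := hSP.isHermitian
  exact ⟨congrArg _ (eq_inv_mulVec_of_mulVec_add_eq hM hK hsol),
    complementProjector_system hM hS hK hsol⟩
end

section
/- Let K_T be a symmetric positive definite n_u × n_u matrix, C an n_u × n_c matrix of full column rank, and R ∈ R^{n_u}. Suppose δU_K ∈ Ker(Cᵀ K_T) solves the projected correction problem and is nonzero. Then the augmented matrix C' = (C | δU_K/‖δU_K‖) has full column rank n_c + 1, and the augmented reduced operator C'ᵀ K_T C' is symmetric positive definite with block structure [[Cᵀ K_T C, 0],[0, δU_Kᵀ K_T δU_K / ‖δU_K‖²]]. -/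
/-!
Because `Cᵀ K_T δU_K = 0`, the new column is `K_T`-orthogonal to every column of `C`, so the
Gram matrix `C'ᵀ K_T C'` is block diagonal. Applying `Cᵀ K_T` to a relation `C x + t w = 0`
kills the `w`-term and leaves `Cᵀ K_T C x = 0`, hence `xᵀ Cᵀ K_T C x = 0` and `C x = 0` by
definiteness; then `t w = 0` with `w ≠ 0`. So `C'` is injective, and the congruence of a
positive definite matrix by an injective matrix is positive definite.
-/

open Matrix

namespace Matrix

variable {m n p ι : Type*} [Fintype m] [Fintype n]

omit [Fintype m] in
lemma mulVec_injective_of_forall_mulVec_eq_zero {A : Matrix m n ℝ}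
    (hA : ∀ x, A *ᵥ x = 0 → x = 0) : Function.Injective A.mulVec := by
  simpa [← coe_mulVecLin, ← LinearMap.ker_eq_bot] using ker_mulVecLin_eq_bot_iff.2 hA

omit [Fintype m] [Fintype n] in
lemma replicateCol_mulVec_eq_zero [Unique ι] {R : Type*} [CommRing R] [NoZeroDivisors R]
    {w : m → R} (hw : w ≠ 0) (y : ι → R) (hy : replicateCol ι w *ᵥ y = 0) : y = 0 := by
  have hyw : replicateCol ι w *ᵥ y = y default • w := by
    ext i
    simp [mulVec, dotProduct, replicateCol, mul_comm]
  have hy0 : y default = 0 := (smul_eq_zero.1 (hyw ▸ hy)).resolve_right hw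
  funext i
  rw [Unique.eq_default i, hy0, Pi.zero_apply]

lemma PosDef.mulVec_eq_zero_of_gram_mulVec_eq_zero {K : Matrix m m ℝ} (hK : K.PosDef)
    {A : Matrix m n ℝ} {x : n → ℝ} (hx : (Aᵀ * K * A) *ᵥ x = 0) : A *ᵥ x = 0 := by
  by_contra hAx
  have hquad : (A *ᵥ x) ⬝ᵥ (K *ᵥ (A *ᵥ x)) = x ⬝ᵥ ((Aᵀ * K * A) *ᵥ x) := by
    rw [← mulVec_mulVec, ← mulVec_mulVec, dotProduct_mulVec x Aᵀ, vecMul_transpose]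
  have hpos := hK.dotProduct_mulVec_pos hAx
  rw [star_trivial, hquad, hx, dotProduct_zero] at hpos
  exact lt_irrefl 0 hpos

lemma fromCols_mulVec_eq_zero_of_posDef [Fintype p] {K : Matrix m m ℝ} (hK : K.PosDef)
    {A : Matrix m n ℝ} {B : Matrix m p ℝ} (hA : ∀ x, A *ᵥ x = 0 → x = 0)
    (hB : ∀ y, B *ᵥ y = 0 → y = 0) (hAB : Aᵀ * K * B = 0) (v : n ⊕ p → ℝ)
    (hv : fromCols A B *ᵥ v = 0) : v = 0 := by
  rw [← Sum.elim_comp_inl_inr v, fromCols_mulVec_sumElim] at hv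
  have hAx : A *ᵥ (v ∘ Sum.inl) = 0 := by
    refine hK.mulVec_eq_zero_of_gram_mulVec_eq_zero ?_
    have := congrArg ((Aᵀ * K) *ᵥ ·) hv
    simpa only [mulVec_add, mulVec_mulVec, ← Matrix.mul_assoc, hAB, zero_mulVec, add_zero,
      mulVec_zero] using this
  have hx := hA _ hAx
  have hy := hB _ (by rwa [hAx, zero_add] at hv)
  rw [← Sum.elim_comp_inl_inr v, hx, hy, Sum.elim_zero_zero]

omit [Fintype n] in
lemma transpose_fromCols_mul_mul_fromCols_of_orthogonal {K : Matrix m m ℝ} (hK : K.IsSymm)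
    (A : Matrix m n ℝ) (B : Matrix m p ℝ) (hAB : Aᵀ * K * B = 0) :
    (fromCols A B)ᵀ * K * fromCols A B = fromBlocks (Aᵀ * K * A) 0 0 (Bᵀ * K * B) := by
  have hBA : Bᵀ * K * A = 0 := by
    simpa only [transpose_mul, transpose_transpose, hK.eq, Matrix.mul_assoc, transpose_zero]
      using congrArg transpose hAB
  rw [transpose_fromCols, fromRows_mul, fromRows_mul_fromCols, hAB, hBA]

omit [Fintype n] in
lemma transpose_replicateCol_mul_mul_replicateCol (K : Matrix m m ℝ) (w : m → ℝ) :
    (replicateCol ι w)ᵀ * K * replicateCol ι w = of fun _ _ : ι => w ⬝ᵥ (K *ᵥ w) := by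
  rw [transpose_replicateCol, Matrix.mul_assoc, ← replicateCol_mulVec,
    replicateRow_mul_replicateCol]

end Matrix

lemma dotProduct_mulVec_normalize {m : Type*} [Fintype m] (K : Matrix m m ℝ) (v : m → ℝ) :
    let w := (Real.sqrt (v ⬝ᵥ v))⁻¹ • v
    w ⬝ᵥ (K *ᵥ w) = (v ⬝ᵥ (K *ᵥ v)) / (v ⬝ᵥ v) := by
  intro w
  rw [mulVec_smul, smul_dotProduct, dotProduct_smul, smul_eq_mul, smul_eq_mul, ← mul_assoc,
    ← mul_inv, Real.mul_self_sqrt (by simpa using dotProduct_star_self_nonneg v), inv_mul_eq_div]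

/-- On-the-fly global enrichment of the reduced basis: adding a normalized nonzero
`K_T`-orthogonal correction vector to the full-column-rank basis `C` yields a
full-column-rank augmented basis, and the augmented reduced operator is SPD with a
block-diagonal structure. -/
theorem reduced_basis_enrichment {nu nc : ℕ}
    (KT : Matrix (Fin nu) (Fin nu) ℝ) (C : Matrix (Fin nu) (Fin nc) ℝ)
    (hKT : KT.PosDef)
    (hC : ∀ x : Fin nc → ℝ, C *ᵥ x = 0 → x = 0)
    (dUK : Fin nu → ℝ) (hne : dUK ≠ 0)
    (hker : (Cᵀ * KT) *ᵥ dUK = 0) :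
    let w : Fin nu → ℝ := (Real.sqrt (dUK ⬝ᵥ dUK))⁻¹ • dUK
    let C' : Matrix (Fin nu) (Fin nc ⊕ Fin 1) ℝ := Matrix.fromCols C (Matrix.replicateCol (Fin 1) w)
    (∀ x : Fin nc ⊕ Fin 1 → ℝ, C' *ᵥ x = 0 → x = 0) ∧
      (C'ᵀ * KT * C').PosDef ∧
      C'ᵀ * KT * C' =
        Matrix.fromBlocks (Cᵀ * KT * C) 0 0
          (Matrix.of fun _ _ : Fin 1 => (dUK ⬝ᵥ (KT *ᵥ dUK)) / (dUK ⬝ᵥ dUK)) := by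
  intro w C'
  have hw : w ≠ 0 := by
    have hpos : 0 < dUK ⬝ᵥ dUK :=
      (by simpa using dotProduct_star_self_nonneg dUK : (0 : ℝ) ≤ _).lt_of_ne'
        (mt dotProduct_self_eq_zero.1 hne)
    exact smul_ne_zero (inv_ne_zero (Real.sqrt_ne_zero'.2 hpos)) hne
  have horth : Cᵀ * KT * replicateCol (Fin 1) w = 0 := by
    rw [← replicateCol_mulVec, mulVec_smul, hker, smul_zero, replicateCol_zero]
  have hinj : ∀ x, C' *ᵥ x = 0 → x = 0 :=
    fromCols_mulVec_eq_zero_of_posDef hKT hC (replicateCol_mulVec_eq_zero hw) horth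
  refine ⟨hinj, ?_, ?_⟩
  · simpa using hKT.conjTranspose_mul_mul_same (mulVec_injective_of_forall_mulVec_eq_zero hinj)
  · rw [transpose_fromCols_mul_mul_fromCols_of_orthogonal (K := KT) hKT.1 C _ horth,
      transpose_replicateCol_mul_mul_replicateCol, dotProduct_mulVec_normalize]
end
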